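/- arXiv:1310.2517 — 2 statements merged into one kernel-verified Lean document; each statement's English description precedes it below -/
import Mathlib

section
/- If a function g : (0,∞) → ℝ satisfies g(θc) ≤ θ²g(c) for all θ ≥ 1 and c > 0, and g(c) < 0 for all c > 0, then for all c > 0 and a ∈ (0,c), g(c) ≤ g(a) + g(√(c² - a²)). -/
theorem stmt_0 (g : ℝ → ℝ)
    (hscale : ∀ θ : ℝ, 1 ≤ θ → ∀ c : ℝ, 0 < c → g (θ * c) ≤ θ ^ 2 * g c)
    (hneg : ∀ c : ℝ, 0 < c → g c < 0) :
    ∀ c : ℝ, 0 < c → ∀ a : ℝ, 0 < a → a < c →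
      g (Real.sqrt (c ^ 2)) ≤ g a + g (Real.sqrt (c ^ 2 - a ^ 2)) := by
  intro c hc a ha hac
  set b := Real.sqrt (c ^ 2 - a ^ 2) with hb
  have hsub : 0 < c ^ 2 - a ^ 2 := by nlinarith
  have hb0 : 0 < b := Real.sqrt_pos.mpr hsub
  have hb2 : b ^ 2 = c ^ 2 - a ^ 2 := Real.sq_sqrt hsub.le
  have hcc : Real.sqrt (c ^ 2) = c := by
    rw [Real.sqrt_sq hc.le]
  rw [hcc]
  -- g c ≤ (c/a)^2 g a and g c ≤ (c/b)^2 g b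
  have h1 : g c ≤ (c / a) ^ 2 * g a := by
    have := hscale (c / a) (by rw [le_div_iff₀ ha]; linarith) a ha
    rwa [div_mul_cancel₀ _ ha.ne'] at this
  have hbc : b < c := by nlinarith
  have h2 : g c ≤ (c / b) ^ 2 * g b := by
    have := hscale (c / b) (by rw [le_div_iff₀ hb0]; linarith) b hb0
    rwa [div_mul_cancel₀ _ hb0.ne'] at this
  have e1 : (a ^ 2 / c ^ 2) * g c ≤ g a := by
    have hc2 : (0:ℝ) < c ^ 2 := by positivity
    have := mul_le_mul_of_nonneg_left h1 (le_of_lt (by positivity : (0:ℝ) < a ^ 2 / c ^ 2))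
    calc (a ^ 2 / c ^ 2) * g c ≤ (a ^ 2 / c ^ 2) * ((c / a) ^ 2 * g a) := this
      _ = g a := by field_simp
  have e2 : (b ^ 2 / c ^ 2) * g c ≤ g b := by
    have := mul_le_mul_of_nonneg_left h2 (le_of_lt (by positivity : (0:ℝ) < b ^ 2 / c ^ 2))
    calc (b ^ 2 / c ^ 2) * g c ≤ (b ^ 2 / c ^ 2) * ((c / b) ^ 2 * g b) := this
      _ = g b := by field_simp
  have hsum : (a ^ 2 / c ^ 2) + (b ^ 2 / c ^ 2) = 1 := by
    field_simp
    nlinarith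
  have : (a ^ 2 / c ^ 2) * g c + (b ^ 2 / c ^ 2) * g c = g c := by
    rw [← add_mul, hsum, one_mul]
  linarith
end

section
/- If g : (0,∞) → ℝ satisfies the strict superquadratic scaling g(θc) < θ² g(c) for all θ > 1 and c > 0, and g(c) < 0 for all c, then for all 0 < a < c, g(c) < g(a) + g(√(c² - a²)). -/
theorem stmt_1 (g : ℝ → ℝ)
    (hscale : ∀ θ : ℝ, 1 < θ → ∀ c : ℝ, 0 < c → g (θ * c) < θ ^ 2 * g c)
    (hneg : ∀ c : ℝ, 0 < c → g c < 0) :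
    ∀ c : ℝ, 0 < c → ∀ a : ℝ, 0 < a → a < c →
      g c < g a + g (Real.sqrt (c ^ 2 - a ^ 2)) := by
  intro c hc a ha hac
  set b := Real.sqrt (c ^ 2 - a ^ 2) with hb
  have hsub : 0 < c ^ 2 - a ^ 2 := by nlinarith
  have hbpos : 0 < b := Real.sqrt_pos.mpr hsub
  have hb2 : b ^ 2 = c ^ 2 - a ^ 2 := Real.sq_sqrt hsub.le
  have hblt : b < c := by nlinarith [Real.sq_sqrt hsub.le]
  -- g(c) < (c/a)^2 g(a)
  have h1 : g c < (c / a) ^ 2 * g a := by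
    have := hscale (c / a) (by rw [lt_div_iff₀ ha]; linarith) a ha
    rwa [div_mul_cancel₀ _ ha.ne'] at this
  have h2 : g c < (c / b) ^ 2 * g b := by
    have := hscale (c / b) (by rw [lt_div_iff₀ hbpos]; linarith) b hbpos
    rwa [div_mul_cancel₀ _ hbpos.ne'] at this
  have e1 : (a ^ 2 / c ^ 2) * g c < g a := by
    have := mul_lt_mul_of_pos_left h1 (show (0:ℝ) < a ^ 2 / c ^ 2 by positivity)
    calc (a ^ 2 / c ^ 2) * g c < (a ^ 2 / c ^ 2) * ((c / a) ^ 2 * g a) := this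
      _ = g a := by field_simp
  have e2 : (b ^ 2 / c ^ 2) * g c < g b := by
    have := mul_lt_mul_of_pos_left h2 (show (0:ℝ) < b ^ 2 / c ^ 2 by positivity)
    calc (b ^ 2 / c ^ 2) * g c < (b ^ 2 / c ^ 2) * ((c / b) ^ 2 * g b) := this
      _ = g b := by field_simp
  have key : (a ^ 2 / c ^ 2) * g c + (b ^ 2 / c ^ 2) * g c = g c := by
    rw [hb2]; field_simp; ring
  linarith
end
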